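/- arXiv:math-ph/0603008 — 2 statements merged into one kernel-verified Lean document; each statement's English description precedes it below -/
import Mathlib

section
/- Let V be a nonzero finite-dimensional complex irreducible module over sl(2,ℂ) with dim V ≠ 3 (i.e. V is not the adjoint representation D₂). Then every totally symmetric trilinear map μ : V × V × V → sl(2,ℂ) which is equivariant (J3: ⁅x, μ(y₁,y₂,y₃)⁆ = μ(x·y₁,y₂,y₃) + μ(y₁,x·y₂,y₃) + μ(y₁,y₂,x·y₃) for all x ∈ sl(2,ℂ), yᵢ ∈ V) and satisfies the identity J4 (μ(y₂,y₃,y₄)·y₁ + μ(y₁,y₃,y₄)·y₂ + μ(y₁,y₂,y₄)·y₃ + μ(y₁,y₂,y₃)·y₄ = 0 for all y₁,…,y₄ ∈ V) is identically zero. (This is the nonexistence part of Theorem 3.1 for g₁ irreducible: only g₁ ≅ D₂ admits a nontrivial structure.) -/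
/-- The Lie algebra `sl(2,ℂ)` of traceless `2×2` complex matrices. -/
abbrev sl2C : Type := ↥(LieAlgebra.SpecialLinear.sl (Fin 2) ℂ)

/-!
Let `v₀` be a primitive vector of weight `n`, so that `V` has basis `ψ k = fᵏ v₀` (`k ≤ n`),
`dim V = n + 1` and `n ≠ 2`. By J3, `μ (ψ a) (ψ b) (ψ c)` has `ad h`-weight `3n - 2(a + b + c)`,
so it vanishes unless that weight is `0` or `±2`; for odd `n` this kills every value.
For `n = 0`, `μ v₀ v₀ v₀` commutes with `h` and `e`, hence is zero.
For `n = 2p + 2 ≥ 4`, weights force `μ v₀ v₀ = 0` and `μ (ψ n) (ψ n) = 0`; J4 then gives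
`⁅μ v₀ z w, v₀⁆ = 0`, so `μ v₀ z w ∈ ℂ ∙ e`, and likewise `μ (ψ n) z w ∈ ℂ ∙ f`. Only the
weight-`2` values `μ v₀ (ψ b) (ψ c)` with `b + c = n + p` can survive; the first of them,
`μ v₀ (ψ p) (ψ n)`, lies in `ℂ ∙ e ∩ ℂ ∙ f = 0`, and J3 for `e` propagates this along the line
`b + c = n + p`. Thus `μ v₀ = 0`, and the kernel of `μ`, a Lie submodule by J3, is all of `V`.
-/

open LieModule

namespace sl2C

lemma mem_sl_iff (A : Matrix (Fin 2) (Fin 2) ℂ) :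
    A ∈ LieAlgebra.SpecialLinear.sl (Fin 2) ℂ ↔ A 0 0 + A 1 1 = 0 := by
  rw [← Matrix.trace_fin_two]; rfl

def h : sl2C := ⟨!![1, 0; 0, -1], (mem_sl_iff _).2 (by simp)⟩
def e : sl2C := ⟨!![0, 1; 0, 0], (mem_sl_iff _).2 (by simp)⟩
def f : sl2C := ⟨!![0, 0; 1, 0], (mem_sl_iff _).2 (by simp)⟩

lemma ext_of_entries {X Y : sl2C} (h₀₀ : X.val 0 0 = Y.val 0 0) (h₀₁ : X.val 0 1 = Y.val 0 1)
    (h₁₀ : X.val 1 0 = Y.val 1 0) : X = Y := by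
  have hX := (mem_sl_iff _).1 X.2
  have hY := (mem_sl_iff _).1 Y.2
  ext i j
  fin_cases i <;> fin_cases j
  exacts [h₀₀, h₀₁, h₁₀, show X.val 1 1 = Y.val 1 1 by linear_combination hX - hY - h₀₀]

lemma eq_smul_h_add_smul_e_add_smul_f (X : sl2C) :
    X = X.val 0 0 • h + X.val 0 1 • e + X.val 1 0 • f := by
  apply ext_of_entries <;> simp [h, e, f]

lemma isSl2Triple : IsSl2Triple h e f where
  h_ne_zero hh := by simpa [h] using congrArg (fun X : sl2C => X.val 0 0) hh
  lie_e_f := by apply ext_of_entries <;> simp [Ring.lie_def, h, e, f]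
  lie_h_e_nsmul := by
    apply ext_of_entries <;> norm_num [Ring.lie_def, Matrix.mul_apply, Fin.sum_univ_two, h, e]
  lie_h_f_nsmul := by
    apply ext_of_entries <;> norm_num [Ring.lie_def, Matrix.mul_apply, Fin.sum_univ_two, h, f]

lemma eq_zero_of_lie_h_eq_smul {X : sl2C} {w : ℂ} (hX : ⁅h, X⁆ = w • X) (h₀ : w ≠ 0)
    (h₂ : w ≠ 2) (hm₂ : w ≠ -2) : X = 0 := by
  have e₀₀ := congrArg (fun Y : sl2C => Y.val 0 0) hX
  have e₀₁ := congrArg (fun Y : sl2C => Y.val 0 1) hX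
  have e₁₀ := congrArg (fun Y : sl2C => Y.val 1 0) hX
  simp [Ring.lie_def, Matrix.mul_apply, Fin.sum_univ_two, Matrix.vecMul, dotProduct, h]
    at e₀₀ e₀₁ e₁₀
  apply ext_of_entries <;> simp only [ZeroMemClass.coe_zero, Matrix.zero_apply]
  · exact e₀₀.resolve_left h₀
  · have : (w - 2) * X.val 0 1 = 0 := by linear_combination -e₀₁
    exact (mul_eq_zero.1 this).resolve_left (sub_ne_zero.2 h₂)
  · have : (w + 2) * X.val 1 0 = 0 := by linear_combination -e₁₀
    exact (mul_eq_zero.1 this).resolve_left fun hw => hm₂ (eq_neg_of_add_eq_zero_left hw)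

lemma eq_zero_of_lie_h_eq_zero_of_lie_e_eq_zero {X : sl2C} (hh : ⁅h, X⁆ = 0)
    (he : ⁅e, X⁆ = 0) : X = 0 := by
  have e₀₁ := congrArg (fun Y : sl2C => Y.val 0 1) hh
  have e₁₀ := congrArg (fun Y : sl2C => Y.val 1 0) hh
  have e₀₁' := congrArg (fun Y : sl2C => Y.val 0 1) he
  have htr := (mem_sl_iff _).1 X.2
  simp [Ring.lie_def, Matrix.mul_apply, Fin.sum_univ_two, Matrix.vecMul, dotProduct, h, e]
    at e₀₁ e₁₀ e₀₁'
  apply ext_of_entries <;> simp only [ZeroMemClass.coe_zero, Matrix.zero_apply]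
  · linear_combination (htr - e₀₁') / 2
  · exact e₀₁
  · linear_combination -e₁₀ / 2

end sl2C

namespace IsSl2Triple

variable {K L M : Type*} [Field K] [LieRing L] [LieAlgebra K L]
  [AddCommGroup M] [Module K M] [LieRingModule L M] [LieModule K L M] {h e f : L}

lemma eq_zero_of_mem_span_e_of_lie_h_eq_smul (t : IsSl2Triple h e f) {X : L} (hX : X ∈ K ∙ e)
    {w : K} (hw : ⁅h, X⁆ = w • X) (hw₂ : w ≠ 2) : X = 0 := by
  obtain ⟨c, rfl⟩ := Submodule.mem_span_singleton.1 hX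
  have : (w - 2) • c • e = 0 := by
    rw [sub_smul, ← hw, lie_smul, t.lie_h_e_smul K, smul_comm, sub_self]
  exact (smul_eq_zero.1 this).resolve_left (sub_ne_zero.2 hw₂)

lemma eq_zero_of_mem_span_e_of_mem_span_f [CharZero K] (t : IsSl2Triple h e f) {X : L}
    (he : X ∈ K ∙ e) (hf : X ∈ K ∙ f) : X = 0 := by
  obtain ⟨c, rfl⟩ := Submodule.mem_span_singleton.1 hf
  refine t.eq_zero_of_mem_span_e_of_lie_h_eq_smul he (w := -2) ?_ (by norm_num)
  rw [lie_smul, t.lie_lie_smul_f K, smul_neg, neg_smul, smul_comm]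

namespace HasPrimitiveVectorWith

variable {t : IsSl2Triple h e f} {m : M}

local notation "ψ " k => ((toEnd K L M f) ^ k) m

lemma coeff_eq_zero_of_lie_eq_zero {μ : K} (P : t.HasPrimitiveVectorWith m μ) (hμ : μ ≠ 0)
    {a b c : K} (hX : ⁅a • h + b • e + c • f, m⁆ = 0) : a = 0 ∧ c = 0 := by
  have hψ₁ : ⁅e, ψ 1⁆ = μ • m := by simpa using P.lie_e_pow_succ_toEnd_f 0
  have hlie : ⁅a • h + b • e + c • f, m⁆ = (a * μ) • m + c • ψ 1 := by
    rw [add_lie, add_lie, smul_lie, smul_lie, smul_lie, P.lie_h, P.lie_e, ← P.lie_f_pow_toEnd_f 0,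
      smul_zero, add_zero, smul_smul, pow_zero, Module.End.one_apply]
  rw [hlie] at hX
  have hc : (c * μ) • m = 0 := by
    have := congrArg (⁅e, ·⁆) hX
    simpa only [lie_add, lie_smul, P.lie_e, hψ₁, smul_zero, zero_add, lie_zero, smul_smul]
      using this
  have hc : c = 0 := by simpa [P.ne_zero, hμ] using hc
  refine ⟨?_, hc⟩
  simpa [hc, P.ne_zero, hμ] using hX

variable [CharZero K] {n : ℕ}

lemma pow_toEnd_f_eq_zero_of_lt [FiniteDimensional K M] (P : t.HasPrimitiveVectorWith m (n : K))
    {k : ℕ} (hk : n < k) : (ψ k) = 0 := by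
  obtain ⟨j, rfl⟩ := Nat.exists_eq_add_of_lt hk
  rw [show n + j + 1 = j + (n + 1) by omega, pow_add, Module.End.mul_apply,
    P.pow_toEnd_f_eq_zero_of_eq_nat rfl, map_zero]

lemma symm_pow_toEnd_f [FiniteDimensional K M] (P : t.HasPrimitiveVectorWith m (n : K)) :
    t.symm.HasPrimitiveVectorWith (ψ n) (n : K) where
  ne_zero := P.pow_toEnd_f_ne_zero_of_eq_nat rfl le_rfl
  lie_h := by rw [neg_lie, P.lie_h_pow_toEnd_f, ← neg_smul]; ring_nf
  lie_e := by rw [P.lie_f_pow_toEnd_f, P.pow_toEnd_f_eq_zero_of_eq_nat rfl]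

lemma linearIndependent_pow_toEnd_f (P : t.HasPrimitiveVectorWith m (n : K)) :
    LinearIndependent K fun i : Fin (n + 1) => ψ (i : ℕ) := by
  refine Module.End.eigenvectors_linearIndependent' (toEnd K L M h)
    (fun i : Fin (n + 1) => (n : K) - 2 * (i : ℕ)) (fun i j hij => ?_) _ fun i => ⟨?_, ?_⟩
  · simpa [Fin.ext_iff] using hij
  · rw [Module.End.mem_eigenspace_iff, toEnd_apply_apply, P.lie_h_pow_toEnd_f]
  · exact P.pow_toEnd_f_ne_zero_of_eq_nat rfl (Nat.lt_succ_iff.1 i.2)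

end HasPrimitiveVectorWith

end IsSl2Triple

def LinearMap.mk₃OfSymm {R M N : Type*} [CommSemiring R] [AddCommMonoid M] [Module R M]
    [AddCommMonoid N] [Module R N] (μ : M → M → M → N)
    (hadd : ∀ y y' z w, μ (y + y') z w = μ y z w + μ y' z w)
    (hsmul : ∀ (a : R) (y z w), μ (a • y) z w = a • μ y z w)
    (hsymm₁ : ∀ y z w, μ y z w = μ z y w) (hsymm₂ : ∀ y z w, μ y z w = μ y w z) :
    M →ₗ[R] M →ₗ[R] M →ₗ[R] N :=
  LinearMap.mk₂ R
    (fun y z =>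
      { toFun := μ y z
        map_add' := fun w w' => by
          rw [hsymm₂ y z (w + w'), hsymm₁ y (w + w') z, hadd, hsymm₁ w y z, hsymm₁ w' y z,
            hsymm₂ y w z, hsymm₂ y w' z]
        map_smul' := fun a w => by
          rw [hsymm₂ y z (a • w), hsymm₁ y (a • w) z, hsmul, hsymm₁ w y z, hsymm₂ y w z]
          rfl })
    (fun y y' z => LinearMap.ext fun w => hadd y y' z w)
    (fun a y z => LinearMap.ext fun w => hsmul a y z w)
    (fun y z z' => LinearMap.ext fun w => by
      simp only [LinearMap.coe_mk, AddHom.coe_mk, LinearMap.add_apply]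
      rw [hsymm₁ y (z + z') w, hadd, hsymm₁ z y w, hsymm₁ z' y w])
    (fun a y z => LinearMap.ext fun w => by
      simp only [LinearMap.coe_mk, AddHom.coe_mk, LinearMap.smul_apply]
      rw [hsymm₁ y (a • z) w, hsmul, hsymm₁ z y w])

/-- The data of an elementary Lie algebra `L ⊕ V` of order 3: a totally symmetric trilinear map
`μ : V³ → L` satisfying the identities J3 (`lie_apply`) and J4 (`lie_add_lie_add_lie_add_lie`). -/
structure IsOrder3Bracket {R L V : Type*} [CommRing R] [LieRing L] [LieAlgebra R L]
    [AddCommGroup V] [Module R V] [LieRingModule L V]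
    (μ : V →ₗ[R] V →ₗ[R] V →ₗ[R] L) : Prop where
  comm₁₂ : ∀ y z w, μ y z w = μ z y w
  comm₂₃ : ∀ y z w, μ y z w = μ y w z
  lie_apply : ∀ (x : L) (y₁ y₂ y₃ : V),
    ⁅x, μ y₁ y₂ y₃⁆ = μ ⁅x, y₁⁆ y₂ y₃ + μ y₁ ⁅x, y₂⁆ y₃ + μ y₁ y₂ ⁅x, y₃⁆
  lie_add_lie_add_lie_add_lie : ∀ y₁ y₂ y₃ y₄ : V,
    ⁅μ y₂ y₃ y₄, y₁⁆ + ⁅μ y₁ y₃ y₄, y₂⁆ + ⁅μ y₁ y₂ y₄, y₃⁆ + ⁅μ y₁ y₂ y₃, y₄⁆ = 0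

namespace IsOrder3Bracket

variable {R L V : Type*} [CommRing R] [LieRing L] [LieAlgebra R L]
  [AddCommGroup V] [Module R V] [LieRingModule L V]
  {μ : V →ₗ[R] V →ₗ[R] V →ₗ[R] L}

lemma lie_apply_eq_smul (hμ : IsOrder3Bracket μ) {x : L} {y₁ y₂ y₃ : V} {a₁ a₂ a₃ : R}
    (h₁ : ⁅x, y₁⁆ = a₁ • y₁) (h₂ : ⁅x, y₂⁆ = a₂ • y₂) (h₃ : ⁅x, y₃⁆ = a₃ • y₃) :
    ⁅x, μ y₁ y₂ y₃⁆ = (a₁ + a₂ + a₃) • μ y₁ y₂ y₃ := by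
  simp only [hμ.lie_apply, h₁, h₂, h₃, map_smul, LinearMap.smul_apply, add_smul]

def ker (hμ : IsOrder3Bracket μ) : LieSubmodule R L V where
  __ := LinearMap.ker μ
  lie_mem {x y} hy := by
    ext z w
    simpa [LinearMap.mem_ker.1 hy, eq_comm] using hμ.lie_apply x y z w

lemma mem_ker (hμ : IsOrder3Bracket μ) {y : V} : y ∈ hμ.ker ↔ μ y = 0 := LinearMap.mem_ker

lemma eq_zero_of_apply_eq_zero [IsIrreducible R L V] (hμ : IsOrder3Bracket μ) {y : V}
    (hy : y ≠ 0) (hμy : μ y = 0) : μ = 0 := by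
  have hker : hμ.ker = ⊤ := (eq_bot_or_eq_top hμ.ker).resolve_left fun hbot =>
    hy <| (LieSubmodule.mem_bot y).1 (hbot ▸ hμ.mem_ker.2 hμy)
  exact LinearMap.ext fun y' => hμ.mem_ker.1 (hker ▸ LieSubmodule.mem_top y')

lemma lie_apply_eq_zero_of_apply_self_eq_zero [IsAddTorsionFree V] (hμ : IsOrder3Bracket μ)
    {y : V} (hy : μ y y = 0) (z w : V) : ⁅μ y z w, y⁆ = 0 := by
  have hJ4 := hμ.lie_add_lie_add_lie_add_lie z w y y
  rw [hμ.comm₁₂ w, hμ.comm₂₃ y w, hμ.comm₁₂ z, hμ.comm₂₃ y z, hy, hμ.comm₂₃ z w, hμ.comm₁₂ z] at hJ4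
  rw [LinearMap.zero_apply, LinearMap.zero_apply, zero_lie, zero_lie, zero_add, zero_add,
    ← two_nsmul] at hJ4
  exact (nsmul_eq_zero_iff.1 hJ4).resolve_right two_ne_zero

end IsOrder3Bracket

namespace sl2C

variable {V : Type*} [AddCommGroup V] [Module ℂ V] [LieRingModule sl2C V] [LieModule ℂ sl2C V]

lemma mem_span_e_of_lie_eq_zero {m : V} {μ : ℂ} (P : isSl2Triple.HasPrimitiveVectorWith m μ)
    (hμ : μ ≠ 0) {X : sl2C} (hX : ⁅X, m⁆ = 0) : X ∈ ℂ ∙ e := by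
  rw [eq_smul_h_add_smul_e_add_smul_f X] at hX ⊢
  obtain ⟨ha, hc⟩ := P.coeff_eq_zero_of_lie_eq_zero hμ hX
  simpa [ha, hc] using Submodule.smul_mem _ _ (Submodule.mem_span_singleton_self e)

lemma mem_span_f_of_lie_eq_zero {m : V} {μ : ℂ} (P : isSl2Triple.symm.HasPrimitiveVectorWith m μ)
    (hμ : μ ≠ 0) {X : sl2C} (hX : ⁅X, m⁆ = 0) : X ∈ ℂ ∙ f := by
  have hX' : X = (-X.val 0 0) • (-h) + X.val 1 0 • f + X.val 0 1 • e := by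
    rw [neg_smul_neg, add_right_comm]; exact eq_smul_h_add_smul_e_add_smul_f X
  rw [hX'] at hX ⊢
  obtain ⟨ha, hc⟩ := P.coeff_eq_zero_of_lie_eq_zero hμ hX
  simpa [ha, hc] using Submodule.smul_mem _ _ (Submodule.mem_span_singleton_self f)

variable {v₀ : V}

local notation "ψ " k => ((toEnd ℂ sl2C V f) ^ k) v₀

lemma span_pow_toEnd_f_eq_top [IsIrreducible ℂ sl2C V] {μ : ℂ}
    (P : isSl2Triple.HasPrimitiveVectorWith v₀ μ) :
    Submodule.span ℂ (Set.range fun k => ψ k) = ⊤ := by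
  set S := Submodule.span ℂ (Set.range fun k => ψ k)
  have hψ (k : ℕ) : (ψ k) ∈ S := Submodule.subset_span ⟨k, rfl⟩
  have hlie (x : sl2C) (k : ℕ) : ⁅x, ψ k⁆ ∈ S := by
    rw [eq_smul_h_add_smul_e_add_smul_f x, add_lie, add_lie, smul_lie, smul_lie, smul_lie]
    refine add_mem (add_mem (S.smul_mem _ ?_) (S.smul_mem _ ?_)) (S.smul_mem _ ?_)
    · rw [P.lie_h_pow_toEnd_f]; exact S.smul_mem _ (hψ k)
    · cases k with
      | zero => simp [P.lie_e]
      | succ k => rw [P.lie_e_pow_succ_toEnd_f]; exact S.smul_mem _ (hψ k)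
    · rw [P.lie_f_pow_toEnd_f]; exact hψ (k + 1)
  let N : LieSubmodule ℂ sl2C V :=
    { S with
      lie_mem {x _} hz := by
        induction hz using Submodule.span_induction with
        | mem _ hu => obtain ⟨k, rfl⟩ := hu; exact hlie x k
        | zero => simp
        | add _ _ _ _ ha hb => rw [lie_add]; exact S.add_mem ha hb
        | smul a _ _ hu => rw [lie_smul]; exact S.smul_mem a hu }
  have hv₀ : v₀ ∈ N := hψ 0
  have hN : N = ⊤ := (eq_bot_or_eq_top N).resolve_left fun hbot =>
    P.ne_zero <| (LieSubmodule.mem_bot _).1 (hbot ▸ hv₀)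
  exact congrArg LieSubmodule.toSubmodule hN

lemma finrank_eq_succ [FiniteDimensional ℂ V] [IsIrreducible ℂ sl2C V] {n : ℕ}
    (P : isSl2Triple.HasPrimitiveVectorWith v₀ (n : ℂ)) : Module.finrank ℂ V = n + 1 := by
  have hsp : ⊤ ≤ Submodule.span ℂ (Set.range fun i : Fin (n + 1) => ψ (i : ℕ)) := by
    rw [← span_pow_toEnd_f_eq_top P, Submodule.span_le]
    rintro _ ⟨k, rfl⟩
    dsimp only
    by_cases hk : k ≤ n
    · exact Submodule.subset_span ⟨⟨k, Nat.lt_succ_of_le hk⟩, rfl⟩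
    · rw [P.pow_toEnd_f_eq_zero_of_lt (not_le.1 hk)]; exact zero_mem _
  rw [Module.finrank_eq_card_basis (.mk P.linearIndependent_pow_toEnd_f hsp), Fintype.card_fin]

end sl2C

namespace IsOrder3Bracket

open sl2C

variable {V : Type*} [AddCommGroup V] [Module ℂ V] [LieRingModule sl2C V] [LieModule ℂ sl2C V]
  {μ : V →ₗ[ℂ] V →ₗ[ℂ] V →ₗ[ℂ] sl2C} {v₀ : V} {n : ℕ}

local notation "ψ " k => ((toEnd ℂ sl2C V f) ^ k) v₀

lemma lie_h_apply_pow_toEnd_f (hμ : IsOrder3Bracket μ)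
    (P : isSl2Triple.HasPrimitiveVectorWith v₀ (n : ℂ)) (a b c : ℕ) :
    ⁅h, μ (ψ a) (ψ b) (ψ c)⁆ = ((3 * n - 2 * (a + b + c) : ℤ) : ℂ) • μ (ψ a) (ψ b) (ψ c) := by
  rw [hμ.lie_apply_eq_smul (P.lie_h_pow_toEnd_f a) (P.lie_h_pow_toEnd_f b)
    (P.lie_h_pow_toEnd_f c)]
  push_cast
  ring_nf

lemma apply_pow_toEnd_f_eq_zero (hμ : IsOrder3Bracket μ)
    (P : isSl2Triple.HasPrimitiveVectorWith v₀ (n : ℂ)) {a b c : ℕ}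
    (h₀ : (3 * n - 2 * (a + b + c) : ℤ) ≠ 0) (h₂ : (3 * n - 2 * (a + b + c) : ℤ) ≠ 2)
    (hm₂ : (3 * n - 2 * (a + b + c) : ℤ) ≠ -2) : μ (ψ a) (ψ b) (ψ c) = 0 :=
  eq_zero_of_lie_h_eq_smul (hμ.lie_h_apply_pow_toEnd_f P a b c) (by exact_mod_cast h₀)
    (by exact_mod_cast h₂) (by exact_mod_cast hm₂)

lemma apply_primitive_pow_toEnd_f_eq_zero_of_eq_zero (hμ : IsOrder3Bracket μ)
    [FiniteDimensional ℂ V] (P : isSl2Triple.HasPrimitiveVectorWith v₀ (n : ℂ)) (hn : n = 0)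
    (b c : ℕ) : μ v₀ (ψ b) (ψ c) = 0 := by
  subst hn
  rcases Nat.eq_zero_or_pos b with rfl | hb
  · rcases Nat.eq_zero_or_pos c with rfl | hc
    · refine eq_zero_of_lie_h_eq_zero_of_lie_e_eq_zero ?_ ?_
      · simpa using hμ.lie_h_apply_pow_toEnd_f P 0 0 0
      · simpa [P.lie_e] using hμ.lie_apply e v₀ v₀ v₀
    · simp [P.pow_toEnd_f_eq_zero_of_lt hc]
  · simp [P.pow_toEnd_f_eq_zero_of_lt hb]

variable [FiniteDimensional ℂ V] [IsIrreducible ℂ sl2C V]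

lemma apply_primitive_mem_span_e (hμ : IsOrder3Bracket μ)
    (P : isSl2Triple.HasPrimitiveVectorWith v₀ (n : ℂ)) (hn : 3 ≤ n) (z w : V) :
    μ v₀ z w ∈ ℂ ∙ e := by
  have hv₀ : μ v₀ v₀ = 0 := LinearMap.ext_on_range (span_pow_toEnd_f_eq_top P) fun c => by
    by_cases hc : c ≤ n
    · simpa using hμ.apply_pow_toEnd_f_eq_zero P (a := 0) (b := 0) (c := c) (by omega)
        (by omega) (by omega)
    · simp [P.pow_toEnd_f_eq_zero_of_lt (not_le.1 hc)]
  have : IsAddTorsionFree V := .of_isTorsionFree ℂ V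
  exact mem_span_e_of_lie_eq_zero P (by exact_mod_cast (by omega : n ≠ 0))
    (hμ.lie_apply_eq_zero_of_apply_self_eq_zero hv₀ z w)

lemma apply_lowest_mem_span_f (hμ : IsOrder3Bracket μ)
    (P : isSl2Triple.HasPrimitiveVectorWith v₀ (n : ℂ)) (hn : 3 ≤ n) (z w : V) :
    μ (ψ n) z w ∈ ℂ ∙ f := by
  have hvn : μ (ψ n) (ψ n) = 0 := LinearMap.ext_on_range (span_pow_toEnd_f_eq_top P) fun c =>
    hμ.apply_pow_toEnd_f_eq_zero P (by omega) (by omega) (by omega)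
  have : IsAddTorsionFree V := .of_isTorsionFree ℂ V
  exact mem_span_f_of_lie_eq_zero P.symm_pow_toEnd_f (by exact_mod_cast (by omega : n ≠ 0))
    (hμ.lie_apply_eq_zero_of_apply_self_eq_zero hvn z w)

lemma apply_primitive_pow_toEnd_f_eq_zero_of_ne (hμ : IsOrder3Bracket μ)
    (P : isSl2Triple.HasPrimitiveVectorWith v₀ (n : ℂ)) (hn : 3 ≤ n) {b c : ℕ}
    (hbc : (3 * n - 2 * (b + c) : ℤ) ≠ 2) : μ v₀ (ψ b) (ψ c) = 0 := by
  refine isSl2Triple.eq_zero_of_mem_span_e_of_lie_h_eq_smul (hμ.apply_primitive_mem_span_e P hn _ _)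
    (w := ((3 * n - 2 * (b + c) : ℤ) : ℂ)) ?_ (by exact_mod_cast hbc)
  simpa using hμ.lie_h_apply_pow_toEnd_f P 0 b c

lemma apply_primitive_pow_toEnd_f_eq_zero_of_add_eq (hμ : IsOrder3Bracket μ)
    (P : isSl2Triple.HasPrimitiveVectorWith v₀ (n : ℂ)) {p : ℕ} (hp : 1 ≤ p)
    (hn : n = 2 * p + 2) {b : ℕ} (hb : p ≤ b) :
    ∀ c, b + c = n + p → c ≤ n → μ v₀ (ψ b) (ψ c) = 0 := by
  induction b, hb using Nat.le_induction with
  | base =>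
    intro c hc _
    obtain rfl : c = n := by omega
    refine isSl2Triple.eq_zero_of_mem_span_e_of_mem_span_f
      (hμ.apply_primitive_mem_span_e P (by omega) _ _) ?_
    rw [hμ.comm₂₃, hμ.comm₁₂]
    exact hμ.apply_lowest_mem_span_f P (by omega) _ _
  | succ b hb ih =>
    intro c hc hcn
    have hJ3 := hμ.lie_apply e v₀ (ψ (b + 1)) (ψ (c + 1))
    rw [hμ.apply_primitive_pow_toEnd_f_eq_zero_of_ne P (by omega) (by omega), P.lie_e,
      P.lie_e_pow_succ_toEnd_f, P.lie_e_pow_succ_toEnd_f, map_smul, map_smul,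
      LinearMap.smul_apply, ih (c + 1) (by omega) (by omega)] at hJ3
    simp only [lie_zero, map_zero, LinearMap.zero_apply, smul_zero, zero_add] at hJ3
    refine (smul_eq_zero.1 hJ3.symm).resolve_left ?_
    have : (n : ℂ) - c ≠ 0 := sub_ne_zero.2 (by exact_mod_cast (by omega : n ≠ c))
    exact mul_ne_zero (Nat.cast_add_one_ne_zero c) this

lemma apply_primitive_pow_toEnd_f_eq_zero_of_even (hμ : IsOrder3Bracket μ)
    (P : isSl2Triple.HasPrimitiveVectorWith v₀ (n : ℂ)) {p : ℕ} (hp : 1 ≤ p)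
    (hn : n = 2 * p + 2) (b c : ℕ) : μ v₀ (ψ b) (ψ c) = 0 := by
  by_cases hc : c ≤ n
  · by_cases hbc : b + c = n + p
    · exact hμ.apply_primitive_pow_toEnd_f_eq_zero_of_add_eq P hp hn (by omega) c hbc hc
    · exact hμ.apply_primitive_pow_toEnd_f_eq_zero_of_ne P (by omega) (by omega)
  · simp [P.pow_toEnd_f_eq_zero_of_lt (not_le.1 hc)]

lemma apply_primitive_eq_zero (hμ : IsOrder3Bracket μ)
    (P : isSl2Triple.HasPrimitiveVectorWith v₀ (n : ℂ)) (hn : n ≠ 2) : μ v₀ = 0 := by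
  have hspan := span_pow_toEnd_f_eq_top P
  refine LinearMap.ext_on_range hspan fun b => LinearMap.ext_on_range hspan fun c => ?_
  obtain ⟨k, rfl | rfl⟩ := n.even_or_odd'
  · rcases k with _ | _ | p
    · exact hμ.apply_primitive_pow_toEnd_f_eq_zero_of_eq_zero P rfl b c
    · exact absurd rfl hn
    · exact hμ.apply_primitive_pow_toEnd_f_eq_zero_of_even P (p := p + 1) le_add_self (by omega) b c
  · simpa using hμ.apply_pow_toEnd_f_eq_zero P (a := 0) (b := b) (c := c) (by omega) (by omega)
      (by omega)

end IsOrder3Bracket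

/-- Let `V` be a nonzero finite-dimensional complex irreducible `sl(2,ℂ)`-module with
`dim V ≠ 3` (i.e. `V` is not the adjoint representation `D₂`).  Then every totally
symmetric trilinear map `μ : V³ → sl(2,ℂ)` which is equivariant (J3) and satisfies J4 is
identically zero.  (The nonexistence part of Theorem 3.1 for `g₁` irreducible.) -/
theorem sl2_irreducible_order3_trivial
    {V : Type*} [AddCommGroup V] [Module ℂ V]
    [LieRingModule sl2C V] [LieModule ℂ sl2C V]
    [FiniteDimensional ℂ V] [Nontrivial V]
    (hirr : ∀ N : LieSubmodule ℂ sl2C V, N = ⊥ ∨ N = ⊤)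
    (hdim : Module.finrank ℂ V ≠ 3)
    (μ : V → V → V → sl2C)
    (hadd : ∀ y y' z w, μ (y + y') z w = μ y z w + μ y' z w)
    (hsmul : ∀ (a : ℂ) (y z w), μ (a • y) z w = a • μ y z w)
    (hsymm₁ : ∀ y z w, μ y z w = μ z y w)
    (hsymm₂ : ∀ y z w, μ y z w = μ y w z)
    (hJ3 : ∀ (x : sl2C) (y₁ y₂ y₃ : V), ⁅x, μ y₁ y₂ y₃⁆ =
      μ ⁅x, y₁⁆ y₂ y₃ + μ y₁ ⁅x, y₂⁆ y₃ + μ y₁ y₂ ⁅x, y₃⁆)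
    (hJ4 : ∀ y₁ y₂ y₃ y₄ : V,
      ⁅μ y₂ y₃ y₄, y₁⁆ + ⁅μ y₁ y₃ y₄, y₂⁆ + ⁅μ y₁ y₂ y₄, y₃⁆ + ⁅μ y₁ y₂ y₃, y₄⁆ = 0) :
    ∀ y₁ y₂ y₃ : V, μ y₁ y₂ y₃ = 0 := by
  have : IsIrreducible ℂ sl2C V := .mk fun N hN => (hirr N).resolve_left hN
  have hμ : IsOrder3Bracket (LinearMap.mk₃OfSymm μ hadd hsmul hsymm₁ hsymm₂) :=
    ⟨hsymm₁, hsymm₂, hJ3, hJ4⟩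
  obtain ⟨_, v₀, -, P⟩ := sl2C.isSl2Triple.exists_hasPrimitiveVectorWith (R := ℂ) (M := V)
  obtain ⟨n, rfl⟩ := P.exists_nat
  have hn : n ≠ 2 := by rintro rfl; exact hdim (sl2C.finrank_eq_succ P)
  have hzero := hμ.eq_zero_of_apply_eq_zero P.ne_zero (hμ.apply_primitive_eq_zero P hn)
  intro y₁ y₂ y₃
  exact LinearMap.congr_fun (LinearMap.congr_fun (LinearMap.congr_fun hzero y₁) y₂) y₃
end

section
/- Let η = diag(1,−1,−1,−1) over ℂ, p = iso(1,3,ℂ) ⊆ gl(5,ℂ) the complexified Poincaré algebra of block matrices M(A,b) = [[A,b],[0,0]] with Aᵀη + ηA = 0, and V ⊆ p its translation ideal {M(0,b) : b ∈ ℂ⁴}. Let g₁ be a module over p on which every element of V acts as zero, and let μ : g₁³ → p be a totally symmetric trilinear map satisfying the equivariance identity J3: ⁅x, μ(y₁,y₂,y₃)⁆ = μ(x·y₁,y₂,y₃) + μ(y₁,x·y₂,y₃) + μ(y₁,y₂,x·y₃) for all x ∈ p, yᵢ ∈ g₁. Then μ takes all its values in V, i.e. μ(y₁,y₂,y₃)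 ∈ V for all y₁,y₂,y₃ ∈ g₁. (Remark 4.6: if the translations act trivially on g₁, the 3-bracket of any Lie algebra of order 3 on iso(1,3,ℂ) ⊕ g₁ must land in the translations; the key fact is that the centralizer of V in p equals V.) -/
noncomputable section

/-- The Minkowski metric `η = diag(1,−1,−1,−1)` over `ℂ`. -/
def etaC : Matrix (Fin 4) (Fin 4) ℂ := Matrix.diagonal ![1, -1, -1, -1]

/-- The block matrix `M(A,b) = [[A,b],[0,0]] ∈ gl(5,ℂ)`. -/
def MblkC (A : Matrix (Fin 4) (Fin 4) ℂ) (b : Fin 4 → ℂ) :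
    Matrix (Fin 4 ⊕ Fin 1) (Fin 4 ⊕ Fin 1) ℂ :=
  Matrix.fromBlocks A (Matrix.of fun i _ => b i) 0 0

/-- The Lorentz condition `Aᵀη + ηA = 0`. -/
def IsLorentzC (A : Matrix (Fin 4) (Fin 4) ℂ) : Prop :=
  A.transpose * etaC + etaC * A = 0

/-!
Since the translations act trivially on `g₁`, the right-hand side of J3 for `x = M(0,b')`
coincides with the one for `x = M(0,0) = 0`, so every value of `μ` commutes with all
translations. As `⁅M(0,b'), M(A,b)⁆ = -M(0, A b')`, the centralizer of `V` in `p` is `V`.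
-/

theorem isLorentzC_zero : IsLorentzC 0 := by
  simp [IsLorentzC]

theorem MblkC_zero_zero : MblkC 0 0 = 0 := by
  simp [MblkC, ← Matrix.fromBlocks_zero]
  rfl

theorem MblkC_zero_eq_zero_iff {b : Fin 4 → ℂ} : MblkC 0 b = 0 ↔ b = 0 := by
  constructor
  · intro h
    funext i
    simpa [MblkC] using congrFun (congrFun h (Sum.inl i)) (Sum.inr 0)
  · rintro rfl
    exact MblkC_zero_zero

theorem lie_MblkC_zero_left (A : Matrix (Fin 4) (Fin 4) ℂ) (b b' : Fin 4 → ℂ) :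
    ⁅MblkC 0 b', MblkC A b⁆ = -MblkC 0 (A.mulVec b') := by
  ext (i | i) (j | j) <;>
    simp [Ring.lie_def, MblkC, Matrix.fromBlocks_multiply, Matrix.mul_apply, Matrix.mulVec,
      dotProduct]

theorem eq_zero_of_forall_lie_MblkC_zero_eq_zero {A : Matrix (Fin 4) (Fin 4) ℂ}
    {b : Fin 4 → ℂ} (h : ∀ b', ⁅MblkC 0 b', MblkC A b⁆ = 0) : A = 0 := by
  refine Matrix.ext_of_mulVec_single fun j => ?_
  have := h (Pi.single j 1)
  rw [lie_MblkC_zero_left, neg_eq_zero, MblkC_zero_eq_zero_iff] at this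
  rw [this, Matrix.zero_mulVec]

theorem threeBracket_valued_in_translations_general
    {g₁ : Type*} [AddCommGroup g₁] [Module ℂ g₁]
    (ρ : Matrix (Fin 4 ⊕ Fin 1) (Fin 4 ⊕ Fin 1) ℂ → Module.End ℂ g₁)
    -- the translations act trivially on g₁
    (htriv : ∀ b : Fin 4 → ℂ, ρ (MblkC 0 b) = 0)
    (μ : g₁ → g₁ → g₁ → Matrix (Fin 4 ⊕ Fin 1) (Fin 4 ⊕ Fin 1) ℂ)
    -- μ takes values in p
    (hval : ∀ y₁ y₂ y₃ : g₁, ∃ A b, IsLorentzC A ∧ μ y₁ y₂ y₃ = MblkC A b)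
    -- J3 : equivariance
    (hJ3 : ∀ (A : Matrix (Fin 4) (Fin 4) ℂ) (b : Fin 4 → ℂ), IsLorentzC A →
      ∀ y₁ y₂ y₃ : g₁,
        ⁅MblkC A b, μ y₁ y₂ y₃⁆ =
          μ (ρ (MblkC A b) y₁) y₂ y₃ + μ y₁ (ρ (MblkC A b) y₂) y₃ +
            μ y₁ y₂ (ρ (MblkC A b) y₃)) :
    ∀ y₁ y₂ y₃ : g₁, ∃ b : Fin 4 → ℂ, μ y₁ y₂ y₃ = MblkC 0 b := by
  intro y₁ y₂ y₃
  obtain ⟨A, b, -, hμ⟩ := hval y₁ y₂ y₃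
  have hcentral (b' : Fin 4 → ℂ) : ⁅MblkC 0 b', μ y₁ y₂ y₃⁆ = 0 :=
    calc ⁅MblkC 0 b', μ y₁ y₂ y₃⁆ = ⁅MblkC 0 0, μ y₁ y₂ y₃⁆ := by
          rw [hJ3 0 b' isLorentzC_zero, hJ3 0 0 isLorentzC_zero, htriv, htriv]
      _ = 0 := by rw [MblkC_zero_zero, Ring.lie_def, zero_mul, mul_zero, sub_zero]
  rw [hμ] at hcentral ⊢
  rw [eq_zero_of_forall_lie_MblkC_zero_eq_zero hcentral]
  exact ⟨b, rfl⟩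

/-- Remark 4.6: let `g₁` be a module over `p = iso(1,3,ℂ)` on which every translation
`M(0,b)` acts as zero, and let `μ : g₁³ → p` be a totally symmetric trilinear map
satisfying the equivariance identity J3.  Then `μ` takes all its values in the
translation ideal `V = {M(0,b)}`. -/
theorem threeBracket_valued_in_translations
    {g₁ : Type*} [AddCommGroup g₁] [Module ℂ g₁]
    (ρ : Matrix (Fin 4 ⊕ Fin 1) (Fin 4 ⊕ Fin 1) ℂ → Module.End ℂ g₁)
    (hadd : ∀ (A : Matrix (Fin 4) (Fin 4) ℂ) (b : Fin 4 → ℂ)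
      (A' : Matrix (Fin 4) (Fin 4) ℂ) (b' : Fin 4 → ℂ),
      IsLorentzC A → IsLorentzC A' →
      ρ (MblkC A b + MblkC A' b') = ρ (MblkC A b) + ρ (MblkC A' b'))
    (hsmul : ∀ (c : ℂ) (A : Matrix (Fin 4) (Fin 4) ℂ) (b : Fin 4 → ℂ),
      IsLorentzC A → ρ (c • MblkC A b) = c • ρ (MblkC A b))
    (hbrk : ∀ (A : Matrix (Fin 4) (Fin 4) ℂ) (b : Fin 4 → ℂ)
      (A' : Matrix (Fin 4) (Fin 4) ℂ) (b' : Fin 4 → ℂ),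
      IsLorentzC A → IsLorentzC A' →
      ρ ⁅MblkC A b, MblkC A' b'⁆ = ⁅ρ (MblkC A b), ρ (MblkC A' b')⁆)
    -- the translations act trivially on g₁
    (htriv : ∀ b : Fin 4 → ℂ, ρ (MblkC 0 b) = 0)
    (μ : g₁ → g₁ → g₁ → Matrix (Fin 4 ⊕ Fin 1) (Fin 4 ⊕ Fin 1) ℂ)
    -- μ takes values in p
    (hval : ∀ y₁ y₂ y₃ : g₁, ∃ A b, IsLorentzC A ∧ μ y₁ y₂ y₃ = MblkC A b)
    -- μ is totally symmetric and trilinear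
    (haddμ : ∀ y y' z w : g₁, μ (y + y') z w = μ y z w + μ y' z w)
    (hsmulμ : ∀ (a : ℂ) (y z w : g₁), μ (a • y) z w = a • μ y z w)
    (hsymm₁ : ∀ y z w : g₁, μ y z w = μ z y w)
    (hsymm₂ : ∀ y z w : g₁, μ y z w = μ y w z)
    -- J3 : equivariance
    (hJ3 : ∀ (A : Matrix (Fin 4) (Fin 4) ℂ) (b : Fin 4 → ℂ), IsLorentzC A →
      ∀ y₁ y₂ y₃ : g₁,
        ⁅MblkC A b, μ y₁ y₂ y₃⁆ =
          μ (ρ (MblkC A b) y₁) y₂ y₃ + μ y₁ (ρ (MblkC A b) y₂) y₃ +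
            μ y₁ y₂ (ρ (MblkC A b) y₃)) :
    ∀ y₁ y₂ y₃ : g₁, ∃ b : Fin 4 → ℂ, μ y₁ y₂ y₃ = MblkC 0 b :=
  threeBracket_valued_in_translations_general ρ htriv μ hval hJ3
end
end
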